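/- Let n ≥ 1, let i ∈ [n], and let σ, τ ∈ S_n with σ(i) = i and τ(i) = i. Define u_σ ∈ S([n]^2) by u_σ(a,b) = (σ(a), b) if b = i and u_σ(a,b) = (a,b) if b ≠ i, and define v_τ ∈ S([n]^2) by v_τ(a,b) = (a, τ(b)) if a = i and v_τ(a,b) = (a,b) if a ≠ i. Then u_σ is compatible with v_τ if and only if στ = τσ in S_n. -/

import Mathlib

/-!
Both `u_σ` and `v_τ` act on one coordinate by a permutation depending on another coordinate:
`u_σ(a, b) = (σ_b a, b)` and `v_τ(a, b) = (a, τ_a b)`, with `σ_b = σ` if `b = i` and `1` otherwise,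
and likewise for `τ_a`. On `[n]³` both `v_τ ⊗ 1` and `1 ⊗ u_σ` then only move the middle coordinate,
by `τ_x` and `σ_z` respectively, so they commute exactly when every `τ_x` commutes with every `σ_z`;
the only nontrivial pair is `x = z = i`.
-/

/-- The permutation `u ⊗ 1` of `[n]³`, acting as `(x,y,z) ↦ (u(x,y), z)`. -/
def tensorOne {n : ℕ} (u : Equiv.Perm (Fin n × Fin n)) :
    Equiv.Perm (Fin n × Fin n × Fin n) :=
  (Equiv.prodAssoc (Fin n) (Fin n) (Fin n)).permCongr (u.prodCongr (Equiv.refl (Fin n)))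

/-- The permutation `1 ⊗ u` of `[n]³`, acting as `(x,y,z) ↦ (x, u(y,z))`. -/
def oneTensor {n : ℕ} (u : Equiv.Perm (Fin n × Fin n)) :
    Equiv.Perm (Fin n × Fin n × Fin n) :=
  (Equiv.refl (Fin n)).prodCongr u

/-- `u` is compatible with `v` if `(v ⊗ 1)(1 ⊗ u) = (1 ⊗ u)(v ⊗ 1)` in `S([n]³)`. -/
def Compatible {n : ℕ} (u v : Equiv.Perm (Fin n × Fin n)) : Prop :=
  tensorOne v * oneTensor u = oneTensor u * tensorOne v

section

variable {n : ℕ}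

lemma tensorOne_apply (u : Equiv.Perm (Fin n × Fin n)) (x y z : Fin n) :
    tensorOne u (x, y, z) = ((u (x, y)).1, (u (x, y)).2, z) := rfl

lemma oneTensor_apply (u : Equiv.Perm (Fin n × Fin n)) (x y z : Fin n) :
    oneTensor u (x, y, z) = (x, u (y, z)) := rfl

lemma compatible_iff_forall_commute {u v : Equiv.Perm (Fin n × Fin n)}
    {f g : Fin n → Equiv.Perm (Fin n)}
    (hu : ∀ a b, u (a, b) = (f b a, b)) (hv : ∀ a b, v (a, b) = (a, g a b)) :
    Compatible u v ↔ ∀ x z, Commute (g x) (f z) := by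
  have hvu : ∀ x y z, (tensorOne v * oneTensor u) (x, y, z) = (x, g x (f z y), z) := by
    simp [Equiv.Perm.mul_apply, tensorOne_apply, oneTensor_apply, hu, hv]
  have huv : ∀ x y z, (oneTensor u * tensorOne v) (x, y, z) = (x, f z (g x y), z) := by
    simp [Equiv.Perm.mul_apply, tensorOne_apply, oneTensor_apply, hu, hv]
  simp only [Compatible, Equiv.ext_iff, Prod.forall, hvu, huv,
    Prod.mk.injEq, true_and, and_true, Commute, SemiconjBy, Equiv.Perm.mul_apply]
  exact ⟨fun h x z y => h x y z, fun h x y z => h x z y⟩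

end

lemma forall_commute_ite_one_iff {M ι : Type*} [Monoid M] [DecidableEq ι] (i : ι) (a b : M) :
    (∀ x z : ι, Commute (if x = i then a else 1) (if z = i then b else 1)) ↔ Commute a b := by
  refine ⟨fun h => by simpa using h i i, fun h x z => ?_⟩
  split_ifs <;> simp [h]

theorem stmt_11_general (n : ℕ) (i : Fin n) (σ τ : Equiv.Perm (Fin n))
    (u v : Equiv.Perm (Fin n × Fin n))
    (hu : ∀ a b : Fin n, u (a, b) = if b = i then (σ a, b) else (a, b))
    (hv : ∀ a b : Fin n, v (a, b) = if a = i then (a, τ b) else (a, b)) :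
    Compatible u v ↔ σ * τ = τ * σ := by
  have hu' : ∀ a b, u (a, b) = ((if b = i then σ else 1) a, b) := fun a b => by
    rw [hu]; split_ifs <;> rfl
  have hv' : ∀ a b, v (a, b) = (a, (if a = i then τ else 1) b) := fun a b => by
    rw [hv]; split_ifs <;> rfl
  rw [compatible_iff_forall_commute hu' hv', forall_commute_ite_one_iff]
  exact Commute.symm_iff

theorem stmt_11 (n : ℕ) (hn : 1 ≤ n) (i : Fin n) (σ τ : Equiv.Perm (Fin n))
    (hσ : σ i = i) (hτ : τ i = i)
    (u v : Equiv.Perm (Fin n × Fin n))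
    (hu : ∀ a b : Fin n, u (a, b) = if b = i then (σ a, b) else (a, b))
    (hv : ∀ a b : Fin n, v (a, b) = if a = i then (a, τ b) else (a, b)) :
    Compatible u v ↔ σ * τ = τ * σ :=
  stmt_11_general n i σ τ u v hu hv
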